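/- arXiv:1410.7213 — 2 statements merged into one kernel-verified Lean document; each statement's English description precedes it below -/
import Mathlib

section
/- Let n ≥ 4 and t ≥ 1, and let G be a connected extremal T_n*-free graph of order n−2+t with maximum degree exactly n−3. Then t ≤ n−4 and e(G) ≤ (n−3)². -/
open SimpleGraph

/-- `G` contains a copy of `H` as a subgraph: there is an injective map
preserving adjacency. -/
def ContainsCopy {V : Type*} {W : Type*} (G : SimpleGraph V) (H : SimpleGraph W) : Prop :=
  ∃ f : W ↪ V, ∀ a b, H.Adj a b → G.Adj (f a) (f b)

/-- `exNum p H` is the maximal number of edges in a simple graph of order `p`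
not containing a copy of `H`. -/
noncomputable def exNum (p : ℕ) {W : Type*} (H : SimpleGraph W) : ℕ :=
  sSup {m : ℕ | ∃ G : SimpleGraph (Fin p), ¬ ContainsCopy G H ∧ Nat.card G.edgeSet = m}

/-- `exNum2 p H₁ H₂` is the maximal number of edges in a simple graph of order `p`
containing no copy of `H₁` and no copy of `H₂`. -/
noncomputable def exNum2 (p : ℕ) {W₁ W₂ : Type*} (H₁ : SimpleGraph W₁) (H₂ : SimpleGraph W₂) : ℕ :=
  sSup {m : ℕ | ∃ G : SimpleGraph (Fin p),
    ¬ ContainsCopy G H₁ ∧ ¬ ContainsCopy G H₂ ∧ Nat.card G.edgeSet = m}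

/-- The tree `T_n` on vertices `v_0, …, v_{n-1}` with edges
`v_0v_1, …, v_0v_{n-2}` and `v_{n-2}v_{n-1}`: the unique tree on `n` vertices
of maximal degree `n-2`. -/
def Tn (n : ℕ) : SimpleGraph (Fin n) :=
  SimpleGraph.fromRel (fun a b =>
    (a.val = 0 ∧ 1 ≤ b.val ∧ b.val ≤ n - 2) ∨ (a.val = n - 2 ∧ b.val = n - 1))

/-- The tree `T_n^*` on vertices `v_0, …, v_{n-1}` with edges
`v_0v_1, …, v_0v_{n-3}`, `v_{n-3}v_{n-2}` and `v_{n-2}v_{n-1}`. -/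
def TnStar (n : ℕ) : SimpleGraph (Fin n) :=
  SimpleGraph.fromRel (fun a b =>
    (a.val = 0 ∧ 1 ≤ b.val ∧ b.val ≤ n - 3) ∨ (a.val = n - 3 ∧ b.val = n - 2) ∨
    (a.val = n - 2 ∧ b.val = n - 1))

/-!
Let `v` have degree `n - 3`. A path `v w a b` with `w ∈ N(v)` and `a, b ∉ N[v]` would extend the
star at `v` to a copy of `T_n^*`, so by connectivity `N(v)` is a vertex cover and
`e(G) ≤ ∑_{w ∈ N(v)} deg w ≤ (n - 3)²`.

If `t ≥ n - 3`, the graph `K_{n-2} ∪ K_{n-3}` plus isolated vertices shows that the extremal number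
is at least `(n - 3)²`, so equality holds throughout: `N(v)` is independent and every `w ∈ N(v)`
has degree `n - 3`. As there are more than `2(n - 3)` vertices, some `s` lies outside
`N(v) ∪ N(w)`; a neighbour `w' ∈ N(v)` of `s` gives the path `w v w' s`, which together with the
star at `w` is again a copy of `T_n^*`.
-/

open Finset

theorem containsCopy_iff_isContained {V W : Type*} {G : SimpleGraph V} {H : SimpleGraph W} :
    ContainsCopy G H ↔ H ⊑ G :=
  isContained_iff_exists_le_comap.symm

theorem extremalNumber_le_exNum (p : ℕ) {W : Type*} (H : SimpleGraph W) :
    extremalNumber p H ≤ exNum p H := by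
  classical
  refine le_of_not_gt fun hlt => ?_
  obtain ⟨G, _, hG, hlt⟩ := (lt_extremalNumber_iff (V := Fin p) H _).1 (by simpa using hlt)
  have hbdd : BddAbove {m | ∃ G : SimpleGraph (Fin p), ¬ContainsCopy G H ∧ Nat.card G.edgeSet = m} :=
    ⟨Nat.card (Sym2 (Fin p)), by
      rintro _ ⟨G', -, rfl⟩
      exact Nat.card_le_card_of_injective _ Subtype.val_injective⟩
  refine hlt.not_ge (le_csSup hbdd ⟨G, ?_, ?_⟩)
  · rwa [containsCopy_iff_isContained]
  · rw [Nat.card_eq_fintype_card, ← edgeFinset_card]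

theorem Finset.exists_equiv_fin_apply_eq {α : Type*} {S : Finset α} {m : ℕ} (hS : #S = m) {x : α}
    (hx : x ∈ S) (i : Fin m) : ∃ e : Fin m ≃ S, e i = ⟨x, hx⟩ := by
  let e : Fin m ≃ S := (S.equivFin.trans (finCongr hS)).symm
  exact ⟨(Equiv.swap (e.symm ⟨x, hx⟩) i).trans e, by simp⟩

theorem Function.injective_of_subset_image_univ {α β : Type*} [Fintype α] [DecidableEq β]
    {f : α → β} {T : Finset β} (hT : T ⊆ univ.image f) (hcard : Fintype.card α ≤ #T) :
    Function.Injective f := by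
  simpa using card_image_iff.1 (le_antisymm card_image_le (hcard.trans (card_le_card hT)))

namespace SimpleGraph

section Sum

variable {V₁ V₂ W : Type*} {G₁ : SimpleGraph V₁} {G₂ : SimpleGraph V₂} {H : SimpleGraph W}

theorem Copy.isContained_left_of_apply_eq_inl (f : Copy H (G₁ ⊕g G₂)) (hH : H.Preconnected)
    {w₀ : W} {a₀ : V₁} (h₀ : f w₀ = .inl a₀) : H ⊑ G₁ := by
  let g : W → V₁ := fun w => (f w).elim (fun a => a) fun _ => a₀
  have hg : ∀ w, f w = .inl (g w) := fun w => by
    have hr : (G₁ ⊕g G₂).Reachable (.inl a₀) (f w) := h₀ ▸ (hH w₀ w).map f.toHom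
    rcases hw : f w with b | b
    · simp [g, hw]
    · exact absurd (hw ▸ hr) (not_reachable_sum_inl_inr _ _)
  refine ⟨⟨⟨g, fun {a b} hab => ?_⟩, fun a b hab => f.injective ?_⟩⟩
  · simpa [hg] using f.toHom.map_adj hab
  · rw [Copy.coe_toHom, hg, hg]
    exact congrArg Sum.inl hab

theorem Connected.free_sum (hH : H.Connected) (h₁ : H.Free G₁) (h₂ : H.Free G₂) :
    H.Free (G₁ ⊕g G₂) := by
  rintro ⟨f⟩
  obtain ⟨w₀⟩ := hH.nonempty
  rcases h₀ : f w₀ with a₀ | a₀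
  · exact h₁ (f.isContained_left_of_apply_eq_inl hH.preconnected h₀)
  · exact h₂ ((Iso.sumComm.toCopy.comp f).isContained_left_of_apply_eq_inl hH.preconnected
      (w₀ := w₀) (a₀ := a₀) (by simp [Copy.comp_apply, h₀, Iso.sumComm]))

theorem card_edgeSet_sum [Finite V₁] [Finite V₂] (G₁ : SimpleGraph V₁) (G₂ : SimpleGraph V₂) :
    Nat.card (G₁ ⊕g G₂).edgeSet = Nat.card G₁.edgeSet + Nat.card G₂.edgeSet := by
  rw [Nat.card_congr edgeSetSumEquiv, Nat.card_sum]

end Sum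

theorem free_top_of_card_lt {W : Type*} [Fintype W] {H : SimpleGraph W} {k : ℕ}
    (hk : k < Fintype.card W) : H.Free (⊤ : SimpleGraph (Fin k)) := fun h => by
  obtain ⟨e⟩ := isContained_top_iff.1 h
  exact hk.not_ge (by simpa using Fintype.card_le_of_embedding e)

theorem card_edgeSet_top_fin (k : ℕ) :
    Nat.card (⊤ : SimpleGraph (Fin k)).edgeSet = k.choose 2 := by
  rw [Nat.card_eq_fintype_card, ← edgeFinset_card, card_edgeFinset_top_eq_card_choose_two,
    Fintype.card_fin]

section VertexCover

variable {V : Type*} [DecidableEq V] {G : SimpleGraph V}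

theorem IsVertexCover.filter_mem_nonempty {A : Finset V} (hA : G.IsVertexCover (A : Set V))
    {e : Sym2 V} (he : e ∈ G.edgeSet) : {a ∈ A | a ∈ e}.Nonempty := by
  induction e using Sym2.ind with
  | _ a b =>
    rcases hA he with ha | hb
    · exact ⟨a, by simpa using ha⟩
    · exact ⟨b, by simpa using hb⟩

variable [Fintype V] [DecidableRel G.Adj]

theorem sum_degree_eq_sum_card_filter_mem (A : Finset V) :
    ∑ a ∈ A, G.degree a = ∑ e ∈ G.edgeFinset, #{a ∈ A | a ∈ e} := by
  simp_rw [← card_incidenceFinset_eq_degree, incidenceFinset_eq_filter]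
  exact sum_card_bipartiteAbove_eq_sum_card_bipartiteBelow (fun a e => a ∈ e)

theorem IsVertexCover.card_edgeFinset_le_sum_degree {A : Finset V}
    (hA : G.IsVertexCover (A : Set V)) : #G.edgeFinset ≤ ∑ a ∈ A, G.degree a := by
  rw [sum_degree_eq_sum_card_filter_mem, card_eq_sum_ones]
  exact sum_le_sum fun e he => card_pos.2 (hA.filter_mem_nonempty (mem_edgeFinset.1 he))

theorem IsVertexCover.card_edgeFinset_lt_sum_degree {A : Finset V}
    (hA : G.IsVertexCover (A : Set V)) (hind : ¬G.IsIndepSet (A : Set V)) :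
    #G.edgeFinset < ∑ a ∈ A, G.degree a := by
  obtain ⟨a, ha, b, hb, -, hab⟩ : ∃ a ∈ A, ∃ b ∈ A, a ≠ b ∧ G.Adj a b := by
    simpa [IsIndepSet, Set.Pairwise] using hind
  rw [sum_degree_eq_sum_card_filter_mem, card_eq_sum_ones]
  refine sum_lt_sum (fun e he => ?_) ⟨s(a, b), by simpa using hab, ?_⟩
  · exact card_pos.2 (hA.filter_mem_nonempty (mem_edgeFinset.1 he))
  · calc 1 < #({a, b} : Finset V) := by rw [card_pair hab.ne]; simp
      _ ≤ _ := card_le_card <| insert_subset_iff.2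
        ⟨mem_filter.2 ⟨ha, by simp⟩, singleton_subset_iff.2 (mem_filter.2 ⟨hb, by simp⟩)⟩

end VertexCover

theorem sum_degree_neighborFinset_le_sq {V : Type*} [Fintype V] {G : SimpleGraph V}
    [DecidableRel G.Adj] {d : ℕ} (hdeg : ∀ u, G.degree u ≤ d) (v : V) :
    ∑ w ∈ G.neighborFinset v, G.degree w ≤ d ^ 2 :=
  calc ∑ w ∈ G.neighborFinset v, G.degree w ≤ ∑ w ∈ G.neighborFinset v, d :=
        sum_le_sum fun w _ => hdeg w
    _ = G.degree v * d := by simp [card_neighborFinset_eq_degree]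
    _ ≤ d ^ 2 := by rw [sq]; exact Nat.mul_le_mul_right d (hdeg v)

end SimpleGraph

theorem tnStar_adj {n : ℕ} {a b : Fin n} :
    (TnStar n).Adj a b ↔ a ≠ b ∧
      ((a.val = 0 ∧ 1 ≤ b.val ∧ b.val ≤ n - 3) ∨ (a.val = n - 3 ∧ b.val = n - 2) ∨
        (a.val = n - 2 ∧ b.val = n - 1) ∨ (b.val = 0 ∧ 1 ≤ a.val ∧ a.val ≤ n - 3) ∨
        (b.val = n - 3 ∧ a.val = n - 2) ∨ (b.val = n - 2 ∧ a.val = n - 1)) := by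
  simp only [TnStar, fromRel_adj]
  tauto

theorem tnStar_connected {n : ℕ} (hn : 0 < n) : (TnStar n).Connected := by
  let root : Fin n := ⟨0, hn⟩
  have star : ∀ b : Fin n, b.val ≤ n - 3 → (TnStar n).Reachable root b := by
    intro b hb
    by_cases h0 : b.val = 0
    · exact (Fin.ext h0 : b = root) ▸ .refl _
    · exact (tnStar_adj.2 ⟨fun h => h0 (by rw [← h]), Or.inl ⟨rfl, by omega, hb⟩⟩).reachable
  have step : ∀ a b : Fin n, (TnStar n).Reachable root a → a.val ≠ b.val →
      (a.val = n - 3 ∧ b.val = n - 2) ∨ (a.val = n - 2 ∧ b.val = n - 1) →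
      (TnStar n).Reachable root b := fun a b ha hab h =>
    ha.trans (tnStar_adj.2 ⟨Fin.ne_of_val_ne hab, by omega⟩).reachable
  have penult : ∀ b : Fin n, b.val = n - 2 → (TnStar n).Reachable root b := fun b hb => by
    by_cases hb' : b.val ≤ n - 3
    · exact star b hb'
    · exact step ⟨n - 3, by omega⟩ b (star _ le_rfl) (by dsimp only; omega) (.inl ⟨rfl, hb⟩)
  have last : ∀ b : Fin n, b.val = n - 1 → (TnStar n).Reachable root b := fun b hb => by
    by_cases hb' : b.val ≤ n - 3
    · exact star b hb'
    · exact step ⟨n - 2, by omega⟩ b (penult _ rfl) (by dsimp only; omega) (.inr ⟨rfl, hb⟩)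
  refine (connected_iff_exists_forall_reachable _).2 ⟨root, fun b => ?_⟩
  rcases (by omega : b.val ≤ n - 3 ∨ b.val = n - 2 ∨ b.val = n - 1) with h | h | h
  exacts [star b h, penult b h, last b h]

theorem exists_tnStar_labelling {V : Type*} [DecidableEq V] {n : ℕ} {S : Finset V} {c x y z : V}
    (hS : #S = n - 3) (hx : x ∈ S) (hc : c ∉ insert y (insert z S)) (hy : y ∉ insert z S)
    (hz : z ∉ S) :
    ∃ f : Fin n ↪ V, (∀ i : Fin n, i.val = 0 → f i = c) ∧
      (∀ i : Fin n, 1 ≤ i.val → i.val ≤ n - 3 → f i ∈ S) ∧ (∀ i : Fin n, i.val = n - 3 → f i = x) ∧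
      (∀ i : Fin n, i.val = n - 2 → f i = y) ∧ (∀ i : Fin n, i.val = n - 1 → f i = z) := by
  have hn : 4 ≤ n := by have := card_pos.2 ⟨x, hx⟩; omega
  -- enumerate `S` so that `x` becomes `v_{n-3}`
  obtain ⟨e, he⟩ := exists_equiv_fin_apply_eq hS hx ⟨n - 4, by omega⟩
  let f : Fin n → V := fun i =>
    if h₀ : i.val = 0 then c else if h : i.val ≤ n - 3 then e ⟨i.val - 1, by omega⟩
    else if i.val = n - 2 then y else z
  have hf_c : ∀ i : Fin n, i.val = 0 → f i = c := fun i hi => by simp [f, hi]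
  have hf_S : ∀ (i : Fin n) (h₀ : i.val ≠ 0) (h : i.val ≤ n - 3),
      f i = e ⟨i.val - 1, by omega⟩ := fun i h₀ h => by simp [f, h₀, h]
  have hf_y : ∀ i : Fin n, i.val = n - 2 → f i = y := fun i hi => by
    simp only [f, dif_neg (show i.val ≠ 0 by omega), dif_neg (show ¬i.val ≤ n - 3 by omega),
      if_pos hi]
  have hf_z : ∀ i : Fin n, i.val = n - 1 → f i = z := fun i hi => by
    simp only [f, dif_neg (show i.val ≠ 0 by omega), dif_neg (show ¬i.val ≤ n - 3 by omega),
      if_neg (show i.val ≠ n - 2 by omega)]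
  -- `f` hits all `n` vertices of `{c, y, z} ∪ S`, so it is injective
  have hinj : Function.Injective f := by
    refine Function.injective_of_subset_image_univ (T := insert c (insert y (insert z S)))
      (fun u hu => ?_) ?_
    · simp only [mem_insert, mem_image, mem_univ, true_and] at hu ⊢
      rcases hu with rfl | rfl | rfl | hu
      · exact ⟨⟨0, by omega⟩, hf_c _ rfl⟩
      · exact ⟨⟨n - 2, by omega⟩, hf_y _ rfl⟩
      · exact ⟨⟨n - 1, by omega⟩, hf_z _ rfl⟩
      · obtain ⟨k, hk⟩ := e.surjective ⟨u, hu⟩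
        refine ⟨⟨k.val + 1, by omega⟩, ?_⟩
        rw [hf_S _ (by simp) (by dsimp only; omega)]
        simp [hk]
    · rw [card_insert_of_notMem hc, card_insert_of_notMem hy, card_insert_of_notMem hz, hS,
        Fintype.card_fin]
      omega
  refine ⟨⟨f, hinj⟩, hf_c, fun i h₀ h => ?_, fun i hi => ?_, hf_y, hf_z⟩
  · simp [hf_S i (by omega) h]
  · simp only [Function.Embedding.coeFn_mk, hf_S i (by omega) hi.le,
      show i.val - 1 = n - 4 by omega, he]

theorem tnStar_isContained_of_star_of_path {V : Type*} {G : SimpleGraph V} {n : ℕ}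
    {S : Finset V} {c x y z : V} (hS : #S = n - 3) (hcS : ∀ s ∈ S, G.Adj c s) (hx : x ∈ S)
    (hxy : G.Adj x y) (hyz : G.Adj y z) (hyc : y ≠ c) (hzc : z ≠ c) (hyS : y ∉ S)
    (hzS : z ∉ S) : TnStar n ⊑ G := by
  classical
  have hcS' : c ∉ S := fun h => G.irrefl (hcS c h)
  obtain ⟨f, hf_c, hf_S, hf_x, hf_y, hf_z⟩ := exists_tnStar_labelling (c := c) (y := y) hS hx
    (by simp [hyc.symm, hzc.symm, hcS']) (by simp [hyz.ne, hyS]) hzS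
  have hf_adj : ∀ a b : Fin n, (a.val = 0 ∧ 1 ≤ b.val ∧ b.val ≤ n - 3) ∨
      (a.val = n - 3 ∧ b.val = n - 2) ∨ (a.val = n - 2 ∧ b.val = n - 1) → G.Adj (f a) (f b) := by
    rintro a b (⟨ha, hb1, hb2⟩ | ⟨ha, hb⟩ | ⟨ha, hb⟩)
    · rw [hf_c a ha]; exact hcS _ (hf_S b hb1 hb2)
    · rw [hf_x a ha, hf_y b hb]; exact hxy
    · rw [hf_y a ha, hf_z b hb]; exact hyz
  refine ⟨⟨⟨f, fun {a b} hab => ?_⟩, f.injective⟩⟩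
  rcases (fromRel_adj _ a b).1 hab with ⟨-, h | h⟩
  exacts [hf_adj a b h, (hf_adj b a h).symm]

theorem sq_le_exNum_tnStar {n p : ℕ} (hn : 4 ≤ n) (hp : 2 * n - 5 ≤ p) :
    (n - 3) ^ 2 ≤ exNum p (TnStar n) := by
  classical
  let G₀ := (⊤ : SimpleGraph (Fin (n - 2))) ⊕g
    ((⊤ : SimpleGraph (Fin (n - 3))) ⊕g (⊥ : SimpleGraph (Fin (p - (2 * n - 5)))))
  have hconn := tnStar_connected (n := n) (by omega)
  have hfree : (TnStar n).Free G₀ :=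
    hconn.free_sum (free_top_of_card_lt (by rw [Fintype.card_fin]; omega)) <|
      hconn.free_sum (free_top_of_card_lt (by rw [Fintype.card_fin]; omega)) <|
        free_bot (ne_bot_iff_exists_adj.2 ⟨⟨0, by omega⟩, ⟨1, by omega⟩,
          tnStar_adj.2 ⟨by simp, Or.inl ⟨rfl, le_rfl, by dsimp only; omega⟩⟩⟩)
  have hedges : #G₀.edgeFinset = (n - 2).choose 2 + (n - 3).choose 2 := by
    rw [edgeFinset_card, ← Nat.card_eq_fintype_card, card_edgeSet_sum, card_edgeSet_sum,
      card_edgeSet_top_fin, card_edgeSet_top_fin]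
    simp
  have hV : Fintype.card (Fin (n - 2) ⊕ (Fin (n - 3) ⊕ Fin (p - (2 * n - 5)))) = p := by
    simp only [Fintype.card_sum, Fintype.card_fin]
    omega
  have hsq : (n - 3) ^ 2 = (n - 2).choose 2 + (n - 3).choose 2 := by
    obtain ⟨m, rfl⟩ : ∃ m, n = m + 4 := ⟨n - 4, by omega⟩
    have := Nat.add_one_mul_choose_eq m 1
    rw [show m + 4 - 2 = m + 1 + 1 by omega, show m + 4 - 3 = m + 1 by omega,
      Nat.choose_succ_succ', Nat.choose_one_right]
    rw [Nat.choose_one_right] at this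
    nlinarith [this]
  calc (n - 3) ^ 2 = #G₀.edgeFinset := by rw [hsq, hedges]
    _ ≤ extremalNumber (Fintype.card _) (TnStar n) := card_edgeFinset_le_extremalNumber hfree
    _ = extremalNumber p (TnStar n) := by rw [hV]
    _ ≤ exNum p (TnStar n) := extremalNumber_le_exNum p _

section TnStarFree

variable {V : Type*} {G : SimpleGraph V} {n : ℕ} {v : V}

theorem isVertexCover_neighborSet_of_free [Fintype (G.neighborSet v)] (hconn : G.Connected)
    (hfree : (TnStar n).Free G) (hv : G.degree v = n - 3) :
    G.IsVertexCover (G.neighborSet v) := by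
  classical
  have no_exit : ∀ w a b, G.Adj v w → G.Adj w a → G.Adj a b → a ≠ v → ¬G.Adj v a →
      b ≠ v → ¬G.Adj v b → False := fun w a b hw hwa hab hav hva hbv hvb =>
    hfree <| tnStar_isContained_of_star_of_path (S := G.neighborFinset v)
      (by rwa [card_neighborFinset_eq_degree]) (by simp) (by simpa using hw) hwa hab hav hbv
      (by simpa using hva) (by simpa using hvb)
  have within_two : ∀ u, u = v ∨ G.Adj v u ∨ ∃ w, G.Adj v w ∧ G.Adj w u := by
    intro u
    induction (reachable_iff_reflTransGen v u).1 (hconn.preconnected v u) with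
    | refl => exact .inl rfl
    | @tail a b _ hab ih =>
      rcases ih with rfl | hva | ⟨w, hvw, hwa⟩
      · exact .inr (.inl hab)
      · exact .inr (.inr ⟨a, hva, hab⟩)
      · by_contra! h
        rcases eq_or_ne a v with rfl | hav
        · exact h.2.1 hab
        by_cases hva : G.Adj v a
        · exact h.2.2 a hva hab
        exact no_exit w a b hvw hwa hab hav hva h.1 h.2.1
  intro a b hab
  by_contra! h
  have hav : a ≠ v := by rintro rfl; exact h.2 hab
  have hbv : b ≠ v := by rintro rfl; exact h.1 hab.symm
  rcases within_two a with rfl | hva | ⟨w, hvw, hwa⟩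
  exacts [hav rfl, h.1 hva, no_exit w a b hvw hwa hab hav h.1 hbv h.2]

variable [Fintype V] [DecidableEq V] [DecidableRel G.Adj]

theorem card_edgeFinset_le_sq_of_free (hconn : G.Connected) (hfree : (TnStar n).Free G)
    (hdeg : ∀ u, G.degree u ≤ n - 3) (hv : G.degree v = n - 3) :
    #G.edgeFinset ≤ (n - 3) ^ 2 := by
  have hcover := isVertexCover_neighborSet_of_free hconn hfree hv
  rw [← coe_neighborFinset] at hcover
  exact hcover.card_edgeFinset_le_sum_degree.trans (sum_degree_neighborFinset_le_sq hdeg v)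

theorem isIndepSet_neighborSet_of_sq_le (hconn : G.Connected) (hfree : (TnStar n).Free G)
    (hdeg : ∀ u, G.degree u ≤ n - 3) (hv : G.degree v = n - 3)
    (hE : (n - 3) ^ 2 ≤ #G.edgeFinset) :
    G.IsIndepSet (G.neighborSet v) ∧ ∀ w ∈ G.neighborFinset v, G.degree w = n - 3 := by
  have hcover := isVertexCover_neighborSet_of_free hconn hfree hv
  rw [← coe_neighborFinset] at hcover
  have hsum := sum_degree_neighborFinset_le_sq hdeg v
  refine ⟨by_contra fun hind => ?_, ?_⟩
  · rw [← coe_neighborFinset] at hind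
    exact ((hcover.card_edgeFinset_lt_sum_degree hind).trans_le hsum).not_ge hE
  refine (sum_eq_sum_iff_of_le fun w _ => hdeg w).1 (le_antisymm (sum_le_sum fun w _ => hdeg w) ?_)
  calc ∑ w ∈ G.neighborFinset v, (n - 3) = (n - 3) ^ 2 := by
        simp [card_neighborFinset_eq_degree, hv, sq]
    _ ≤ _ := hE.trans hcover.card_edgeFinset_le_sum_degree

theorem card_le_of_free_of_sq_le (hn : 4 ≤ n) (hconn : G.Connected) (hfree : (TnStar n).Free G)
    (hdeg : ∀ u, G.degree u ≤ n - 3) (hv : G.degree v = n - 3)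
    (hE : (n - 3) ^ 2 ≤ #G.edgeFinset) : Fintype.card V ≤ 2 * (n - 3) := by
  obtain ⟨hind, hdegN⟩ := isIndepSet_neighborSet_of_sq_le hconn hfree hdeg hv hE
  have hcover := isVertexCover_neighborSet_of_free hconn hfree hv
  obtain ⟨w, hw⟩ : (G.neighborFinset v).Nonempty :=
    card_pos.1 (by rw [card_neighborFinset_eq_degree, hv]; omega)
  by_contra! hV
  obtain ⟨s, hs⟩ : ∃ s, s ∉ G.neighborFinset v ∪ G.neighborFinset w := by
    by_contra! h
    have := (card_le_card (s := univ) fun s _ => h s).trans (card_union_le _ _)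
    simp only [card_univ, card_neighborFinset_eq_degree, hv, hdegN w hw] at this
    omega
  simp only [mem_union, mem_neighborFinset, not_or] at hs hw
  have hsv : s ≠ v := by rintro rfl; exact hs.2 hw.symm
  obtain ⟨w', hsw'⟩ := (hconn.preconnected s v).nonempty_neighborSet_left hsv
  have hvw' : G.Adj v w' := (hcover hsw').resolve_left hs.1
  have hww' : w ≠ w' := by rintro rfl; exact hs.2 hsw'.symm
  exact hfree <| tnStar_isContained_of_star_of_path (S := G.neighborFinset w)
    (by rw [card_neighborFinset_eq_degree, hdegN w (by simpa using hw)]) (by simp)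
    (by simpa using hw.symm) hvw' hsw'.symm hww'.symm (by rintro rfl; exact hs.1 hw)
    (by simpa using hind hw hvw' hww') (by simpa using hs.2)

end TnStarFree

theorem stmt6_general (n t : ℕ) (hn : 4 ≤ n) (G : SimpleGraph (Fin (n - 2 + t)))
    (hconn : G.Connected)
    (hfree : ¬ ContainsCopy G (TnStar n))
    (hext : Nat.card G.edgeSet = exNum (n - 2 + t) (TnStar n))
    (hde : ∀ v, Nat.card (G.neighborSet v) ≤ n - 3)
    (hmax : ∃ v, Nat.card (G.neighborSet v) = n - 3) :
    t ≤ n - 4 ∧ Nat.card G.edgeSet ≤ (n - 3) ^ 2 := by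
  classical
  rw [containsCopy_iff_isContained] at hfree
  simp only [Nat.card_eq_fintype_card, card_neighborSet_eq_degree] at hde hmax
  obtain ⟨v, hv⟩ := hmax
  have hE : Nat.card G.edgeSet = #G.edgeFinset := by
    rw [Nat.card_eq_fintype_card, edgeFinset_card]
  refine ⟨?_, hE ▸ card_edgeFinset_le_sq_of_free hconn hfree hde hv⟩
  by_contra! hlarge
  have hlow : (n - 3) ^ 2 ≤ #G.edgeFinset := hE ▸ hext ▸ sq_le_exNum_tnStar hn (by omega)
  have hcard := card_le_of_free_of_sq_le hn hconn hfree hde hv hlow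
  simp only [Fintype.card_fin] at hcard
  omega

theorem stmt6 (n t : ℕ) (hn : 4 ≤ n) (ht : 1 ≤ t) (G : SimpleGraph (Fin (n - 2 + t)))
    (hconn : G.Connected)
    (hfree : ¬ ContainsCopy G (TnStar n))
    (hext : Nat.card G.edgeSet = exNum (n - 2 + t) (TnStar n))
    (hde : ∀ v, Nat.card (G.neighborSet v) ≤ n - 3)
    (hmax : ∃ v, Nat.card (G.neighborSet v) = n - 3) :
    t ≤ n - 4 ∧ Nat.card G.edgeSet ≤ (n - 3) ^ 2 :=
  stmt6_general n t hn G hconn hfree hext hde hmax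
end

section
/- Let p ≥ n ≥ 6 with p ≡ 1 (mod n−1). Then ex(p;T_n*) = (n−2)(p−1)/2. -/
open SimpleGraph

/-!
Lower bound: `(p - 1) / (n - 1)` disjoint copies of `K_{n-1}` plus an isolated vertex; every
component has fewer than `n` vertices, so the connected tree `T_n^*` does not embed.

Upper bound: a connected `T_n^*`-free graph on `m ≥ n` vertices has `2e ≤ (n - 2)(m - 1)`, by
induction on `m`. If some vertex has degree at most `(n - 2) / 2`, delete it: every component
of the rest satisfies the bound, by induction, trivially when it has fewer than `n - 1`
vertices, and when it has exactly `n - 1` vertices because otherwise it contains two vertices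
adjacent to all of it, which together with an edge leaving the component span a `T_n^*`.
Otherwise all degrees are at least `3` and some vertex `v` has degree at least `n - 2`; a star
at `v` together with a path `v - x - y - z` (with `y` outside the closed neighbourhood of `v`
when `deg v = n - 2`) spans a `T_n^*`. Summing over components, a `T_n^*`-free graph on `p`
vertices has `2e ≤ (n - 2)p - (n - 2)`, unless all its components have `n - 1` vertices, which
is impossible when `p ≡ 1 (mod n - 1)`.
-/

open Finset

lemma List.getElem_cons_append_triple {α : Type*} {w x y z : α} {M : List α} {i : ℕ}
    (h : i < (w :: M ++ [x, y, z]).length) :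
    (i = 0 ∧ (w :: M ++ [x, y, z])[i] = w) ∨
      (1 ≤ i ∧ i ≤ M.length ∧ (w :: M ++ [x, y, z])[i] ∈ M) ∨
      (i = M.length + 1 ∧ (w :: M ++ [x, y, z])[i] = x) ∨
      (i = M.length + 2 ∧ (w :: M ++ [x, y, z])[i] = y) ∨
      (i = M.length + 3 ∧ (w :: M ++ [x, y, z])[i] = z) := by
  simp only [List.cons_append, List.getElem_cons, List.getElem_append]
  split_ifs with h0 h1 h2 h3 h4
  · exact .inl ⟨h0, rfl⟩
  · exact .inr <| .inl ⟨by omega, by omega, List.getElem_mem _⟩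
  · exact .inr <| .inr <| .inl ⟨by omega, rfl⟩
  · exact .inr <| .inr <| .inr <| .inl ⟨by omega, rfl⟩
  · exact .inr <| .inr <| .inr <| .inr ⟨by omega, rfl⟩
  · simp only [List.cons_append, List.length_cons, List.length_append, List.length_nil] at h
    omega

namespace SimpleGraph

variable {V : Type*}

section

variable [DecidableEq V] (G : SimpleGraph V)

/-- Connectedness of the subgraph induced on `s`, phrased by cuts. -/
def ConnectedOn (s : Finset V) : Prop :=
  ∀ t ⊆ s, t.Nonempty → t ≠ s → ∃ a ∈ t, ∃ b ∈ s \ t, G.Adj a b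

variable {G}

lemma containsCopy_tnStar {n : ℕ} (hn : 4 ≤ n) {w x y z : V} (hwx : G.Adj w x)
    (hxy : G.Adj x y) (hyz : G.Adj y z) (hwy : w ≠ y) (hwz : w ≠ z) (hxz : x ≠ z)
    {L : Finset V} (hL : ∀ l ∈ L, G.Adj w l) (hcard : n - 1 ≤ #(L ∪ {x, y, z})) :
    ContainsCopy G (TnStar n) := by
  obtain ⟨M, hML, hMcard⟩ := exists_subset_card_eq (s := L \ {x, y, z}) (n := n - 4) (by
    have := card_sdiff_add_card L {x, y, z}
    have := card_le_three (a := x) (b := y) (c := z)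
    omega)
  have hM : ∀ m ∈ M, G.Adj w m ∧ m ≠ x ∧ m ≠ y ∧ m ≠ z := fun m hm => by
    have := hML hm
    simp only [mem_sdiff, mem_insert, mem_singleton, not_or] at this
    exact ⟨hL m this.1, this.2⟩
  have hnodup : (w :: M.toList ++ [x, y, z]).Nodup := by
    simp only [List.cons_append, List.nodup_cons, List.mem_append, mem_toList,
      List.mem_cons, List.nodup_append, nodup_toList, List.not_mem_nil]
    refine ⟨by simpa [hwx.ne, hwy, hwz] using fun h => G.loopless.irrefl w (hM w h).1,
      trivial, by simp [hxy.ne, hxz, hyz.ne], fun m hm v hv => ?_⟩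
    rcases hv with rfl | rfl | rfl | h
    exacts [(hM m hm).2.1, (hM m hm).2.2.1, (hM m hm).2.2.2, h.elim]
  have hMl : M.toList.length = n - 4 := by rw [length_toList, hMcard]
  have hlen : (w :: M.toList ++ [x, y, z]).length = n := by simp [hMl]; omega
  -- the vertices `v_0, …, v_{n-1}` of `T_n^*`, in order
  let f : Fin n → V := fun i => (w :: M.toList ++ [x, y, z])[i.val]
  have hf : ∀ a b : Fin n, ((a.val = 0 ∧ 1 ≤ b.val ∧ b.val ≤ n - 3) ∨
      (a.val = n - 3 ∧ b.val = n - 2) ∨ (a.val = n - 2 ∧ b.val = n - 1)) → G.Adj (f a) (f b) := by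
    intro a b hab
    have hcases := fun i h => @List.getElem_cons_append_triple V w x y z M.toList i h
    rcases hcases a.val (by omega) with
      ⟨ha, hfa⟩ | ⟨ha, ha', hfa⟩ | ⟨ha, hfa⟩ | ⟨ha, hfa⟩ | ⟨ha, hfa⟩ <;>
    rcases hcases b.val (by omega) with
      ⟨hb, hfb⟩ | ⟨hb, hb', hfb⟩ | ⟨hb, hfb⟩ | ⟨hb, hfb⟩ | ⟨hb, hfb⟩ <;>
    first
    | omega
    | (simp only [f, hfa, hfb]; first | assumption | exact (hM _ (mem_toList.1 hfb)).1)
  refine ⟨⟨f, fun a b hab => Fin.ext ((hnodup.getElem_inj_iff).1 hab)⟩, fun a b hab => ?_⟩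
  rw [TnStar, fromRel_adj] at hab
  exact hab.2.elim (hf a b) fun h => (hf b a h).symm

end

variable (G : SimpleGraph V) [DecidableRel G.Adj]

def degIn (s : Finset V) (v : V) : ℕ := #{w ∈ s | G.Adj v w}

/-- Twice the number of edges of the subgraph induced on `s`. -/
def degSum (s : Finset V) : ℕ := ∑ v ∈ s, G.degIn s v

variable {G}

lemma degSum_univ [Fintype V] : G.degSum univ = 2 * Nat.card G.edgeSet := by
  rw [Nat.card_eq_fintype_card, ← edgeFinset_card, ← sum_degrees_eq_twice_card_edges]
  exact sum_congr rfl fun v _ => by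
    rw [degIn, ← neighborFinset_eq_filter, card_neighborFinset_eq_degree]

lemma exists_lt_degIn_of_mul_card_lt {s : Finset V} {c : ℕ} (h : c * #s < G.degSum s) :
    ∃ v ∈ s, c < G.degIn s v := by
  by_contra! hsmall
  have : G.degSum s ≤ c * #s :=
    calc G.degSum s ≤ ∑ _v ∈ s, c := sum_le_sum hsmall
      _ = c * #s := by rw [sum_const, smul_eq_mul, mul_comm]
  omega

variable [DecidableEq V] {s t u : Finset V} {v w : V}

lemma filter_adj_subset_erase : {w ∈ s | G.Adj v w} ⊆ s.erase v := fun w hw => by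
  rw [mem_filter] at hw
  exact mem_erase.2 ⟨(G.ne_of_adj hw.2).symm, hw.1⟩

lemma degIn_le (hv : v ∈ s) : G.degIn s v ≤ #s - 1 := by
  rw [← card_erase_of_mem hv]
  exact card_le_card filter_adj_subset_erase

lemma adj_of_degIn_eq (hv : v ∈ s) (huniv : G.degIn s v = #s - 1) (hw : w ∈ s) (hvw : v ≠ w) :
    G.Adj v w := by
  have heq := eq_of_subset_of_card_le (filter_adj_subset_erase (G := G) (s := s) (v := v))
    (by rw [card_erase_of_mem hv]; exact huniv.ge)
  have hw' : w ∈ {u ∈ s | G.Adj v u} := heq ▸ mem_erase.2 ⟨hvw.symm, hw⟩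
  exact (mem_filter.1 hw').2

lemma degSum_le (s : Finset V) : G.degSum s ≤ #s * (#s - 1) :=
  calc G.degSum s ≤ ∑ _v ∈ s, (#s - 1) := sum_le_sum fun _ hv => degIn_le hv
    _ = #s * (#s - 1) := by rw [sum_const, smul_eq_mul]

lemma degSum_add_le_of_card_le {c : ℕ} (hs : s.Nonempty) (hc : #s ≤ c) :
    G.degSum s + c ≤ c * #s := by
  obtain ⟨k, hk⟩ : ∃ k, #s = k + 1 := ⟨#s - 1, by have := hs.card_pos; omega⟩
  have := degSum_le (G := G) s
  rw [hk, Nat.add_sub_cancel] at this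
  rw [hk]
  nlinarith

lemma degSum_le_add_card_filter_degIn_eq (s : Finset V) :
    G.degSum s ≤ (#s - 2) * #s + #{v ∈ s | G.degIn s v = #s - 1} :=
  calc G.degSum s ≤ ∑ v ∈ s, ((#s - 2) + if G.degIn s v = #s - 1 then 1 else 0) :=
        sum_le_sum fun v hv => by have := degIn_le (G := G) hv; split_ifs <;> omega
    _ = _ := by rw [sum_add_distrib, sum_const, smul_eq_mul, card_filter, mul_comm]

lemma degSum_insert (hv : v ∉ s) : G.degSum (insert v s) = G.degSum s + 2 * G.degIn s v := by
  simp only [degSum, degIn, card_filter, sum_insert hv, G.loopless.irrefl v, if_false, zero_add,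
    sum_add_distrib]
  simp_rw [G.adj_comm _ v]
  ring

lemma degSum_erase (hv : v ∈ s) : G.degSum s = G.degSum (s.erase v) + 2 * G.degIn s v := by
  have hdeg : G.degIn (s.erase v) v = G.degIn s v := by
    simp only [degIn, filter_erase, G.loopless.irrefl v, not_false_eq_true, erase_eq_of_notMem,
      mem_filter, and_false]
  conv_lhs => rw [← insert_erase hv, degSum_insert (notMem_erase v s), hdeg]

lemma degIn_union_of_forall_not_adj (hsep : ∀ a ∈ t, ∀ b ∈ u, ¬ G.Adj a b) (hv : v ∈ t) :
    G.degIn (t ∪ u) v = G.degIn t v := by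
  rw [degIn, filter_union, filter_false_of_mem fun b hb => hsep v hv b hb, union_empty, degIn]

lemma degSum_union_of_forall_not_adj (hd : Disjoint t u) (hsep : ∀ a ∈ t, ∀ b ∈ u, ¬ G.Adj a b) :
    G.degSum (t ∪ u) = G.degSum t + G.degSum u := by
  have hsep' : ∀ a ∈ u, ∀ b ∈ t, ¬ G.Adj a b := fun a ha b hb h => hsep b hb a ha h.symm
  rw [degSum, sum_union hd, sum_congr rfl fun v hv => degIn_union_of_forall_not_adj hsep hv,
    union_comm, sum_congr rfl fun v hv => degIn_union_of_forall_not_adj hsep' hv]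
  rfl

/-- A nonempty set closed in `s` of minimal size is connected. -/
lemma exists_connectedOn_subset (hs : s.Nonempty) :
    ∃ t ⊆ s, t.Nonempty ∧ G.ConnectedOn t ∧ ∀ a ∈ t, ∀ b ∈ s \ t, ¬ G.Adj a b := by
  obtain ⟨t, ht, hmin⟩ := exists_min_image
    {t ∈ s.powerset | t.Nonempty ∧ ∀ a ∈ t, ∀ b ∈ s \ t, ¬ G.Adj a b} card
    ⟨s, mem_filter.2 ⟨mem_powerset_self s, hs, by simp⟩⟩
  rw [mem_filter, mem_powerset] at ht
  refine ⟨t, ht.1, ht.2.1, fun t' ht' hne hne' => ?_, ht.2.2⟩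
  by_contra! hno
  have hclosed : ∀ a ∈ t', ∀ b ∈ s \ t', ¬ G.Adj a b := fun a ha b hb => by
    by_cases hbt : b ∈ t
    · exact hno a ha b (mem_sdiff.2 ⟨hbt, (mem_sdiff.1 hb).2⟩)
    · exact ht.2.2 a (ht' ha) b (mem_sdiff.2 ⟨(mem_sdiff.1 hb).1, hbt⟩)
  have := hmin t' (mem_filter.2 ⟨mem_powerset.2 (ht'.trans ht.1), hne, hclosed⟩)
  exact absurd this (not_le.2 (card_lt_card (ssubset_of_subset_of_ne ht' hne')))

lemma induction_on_connectedOn {P : Finset V → Prop} (empty : P ∅)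
    (union : ∀ t u, Disjoint t u → (∀ a ∈ t, ∀ b ∈ u, ¬ G.Adj a b) → P t → P u → P (t ∪ u))
    (s : Finset V) (conn : ∀ t ⊆ s, t.Nonempty → G.ConnectedOn t → P t) : P s := by
  induction s using Finset.strongInduction with
  | H s ih =>
    rcases s.eq_empty_or_nonempty with rfl | hs
    · exact empty
    obtain ⟨t, hts, htne, htc, hsep⟩ := exists_connectedOn_subset (G := G) hs
    rw [← union_sdiff_of_subset hts]
    exact union t (s \ t) disjoint_sdiff hsep (conn t hts htne htc)
      (ih _ (sdiff_ssubset hts htne) fun t' ht' => conn t' (ht'.trans sdiff_subset))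

lemma degSum_add_le_of_forall_connectedOn (c : ℕ)
    (h : ∀ t ⊆ s, t.Nonempty → G.ConnectedOn t → G.degSum t + c ≤ c * #t) (hs : s.Nonempty) :
    G.degSum s + c ≤ c * #s := by
  suffices s = ∅ ∨ G.degSum s + c ≤ c * #s from this.resolve_left hs.ne_empty
  refine induction_on_connectedOn (P := fun s => s = ∅ ∨ G.degSum s + c ≤ c * #s) (Or.inl rfl) ?_ s
    fun t ht hne hc => Or.inr (h t ht hne hc)
  rintro t u hd hsep (rfl | ht) (rfl | hu)
  · simp
  · simp [hu]
  · simp [ht]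
  · right
    rw [degSum_union_of_forall_not_adj hd hsep, card_union_of_disjoint hd, mul_add]
    omega

lemma exists_adj_ne_ne (hdeg : 3 ≤ G.degIn s v) (a b : V) :
    ∃ w ∈ s, G.Adj v w ∧ w ≠ a ∧ w ≠ b := by
  obtain ⟨w, hw⟩ : ({w ∈ s | G.Adj v w} \ {a, b}).Nonempty := by
    rw [← card_pos]
    have := le_card_sdiff {a, b} {w ∈ s | G.Adj v w}
    have := card_le_two (a := a) (b := b)
    unfold degIn at hdeg
    omega
  simp only [mem_sdiff, mem_filter, mem_insert, mem_singleton, not_or] at hw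
  exact ⟨w, hw.1.1, hw.1.2, hw.2⟩

lemma containsCopy_tnStar_of_two_universal {n : ℕ} {x y : V} (hn : 4 ≤ n) (ht : #t = n - 1)
    (huniv : 1 < #{v ∈ t | G.degIn t v = #t - 1}) (hx : x ∈ t) (hy : y ∉ t) (hxy : G.Adj x y) :
    ContainsCopy G (TnStar n) := by
  have huniv_adj : ∀ v ∈ {v ∈ t | G.degIn t v = #t - 1}, ∀ w ∈ t, v ≠ w → G.Adj v w :=
    fun v hv _ hw => adj_of_degIn_eq (mem_filter.1 hv).1 (mem_filter.1 hv).2 hw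
  obtain ⟨c, hc, hcx⟩ := exists_mem_ne huniv x
  obtain ⟨d, hd, hdc⟩ := exists_mem_ne huniv c
  have hct := (mem_filter.1 hc).1
  -- the path `c - d - x - y` if `d ≠ x`, otherwise `c - e - x - y` for any other `e`
  obtain ⟨e, het, hec, hex, hex'⟩ : ∃ e ∈ t, e ≠ c ∧ e ≠ x ∧ G.Adj e x := by
    by_cases hdx : d = x
    · subst hdx
      obtain ⟨e, he⟩ : ((t.erase c).erase d).Nonempty := by
        rw [← card_pos, card_erase_of_mem (mem_erase.2 ⟨hdc, hx⟩), card_erase_of_mem hct]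
        omega
      simp only [mem_erase] at he
      exact ⟨e, he.2.2, he.2.1, he.1, (huniv_adj d hd e he.2.2 (Ne.symm he.1)).symm⟩
    · exact ⟨d, (mem_filter.1 hd).1, hdc, hdx, huniv_adj d hd x hx hdx⟩
  refine containsCopy_tnStar hn (huniv_adj c hc e het (Ne.symm hec)) hex' hxy hcx
    (fun h => hy (h ▸ hct)) (fun h => hy (h ▸ het)) (L := t.erase c)
    (fun l hl => huniv_adj c hc l (mem_erase.1 hl).2 (Ne.symm (mem_erase.1 hl).1)) ?_
  calc n - 1 = #(insert y (t.erase c)) := by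
        rw [card_insert_of_notMem fun h => hy (mem_of_mem_erase h), card_erase_of_mem hct]
        omega
    _ ≤ #(t.erase c ∪ {e, x, y}) := card_le_card (insert_subset (by simp) subset_union_left)

lemma containsCopy_tnStar_of_le_degIn {n : ℕ} (hn : 4 ≤ n) (hs : G.ConnectedOn s)
    (hcard : n ≤ #s) (hdeg : ∀ v ∈ s, 3 ≤ G.degIn s v) (hv : v ∈ s) (hdv : n - 2 ≤ G.degIn s v) :
    ContainsCopy G (TnStar n) := by
  set N := {w ∈ s | G.Adj v w}
  have hNcard : #N = G.degIn s v := rfl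
  have hNadj : ∀ w ∈ N, G.Adj v w := fun w hw => (mem_filter.1 hw).2
  -- the leaves of the star come from `N`; when `#N = n - 2` this needs `y ∉ N`
  obtain ⟨x, y, hx, hxy, hyv, hys, hcardN⟩ : ∃ x y, G.Adj v x ∧ G.Adj x y ∧ y ≠ v ∧ y ∈ s ∧
      n - 1 ≤ #(insert y N) := by
    by_cases hlarge : n - 1 ≤ #N
    · obtain ⟨x, hxs, hvx, -, -⟩ := exists_adj_ne_ne (hdeg v hv) v v
      obtain ⟨y, hys, hxy, hyv, -⟩ := exists_adj_ne_ne (hdeg x hxs) v v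
      exact ⟨x, y, hvx, hxy, hyv, hys, hlarge.trans (card_le_card (subset_insert y N))⟩
    · have hNs : insert v N ⊆ s := insert_subset hv (filter_subset _ _)
      obtain ⟨x, hx, y, hy, hxy⟩ := hs (insert v N) hNs (insert_nonempty v N) fun h => by
        have := card_insert_le v N
        rw [h] at this
        omega
      simp only [mem_sdiff, mem_insert, not_or] at hy
      rcases mem_insert.1 hx with rfl | hx
      · exact absurd (mem_filter.2 ⟨hy.1, hxy⟩) hy.2.2
      · refine ⟨x, y, hNadj x hx, hxy, hy.2.1, hy.1, ?_⟩
        rw [card_insert_of_notMem hy.2.2]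
        omega
  obtain ⟨z, -, hyz, hzv, hzx⟩ := exists_adj_ne_ne (hdeg y hys) v x
  exact containsCopy_tnStar hn hx hxy hyz hyv.symm hzv.symm hzx.symm hNadj
    (hcardN.trans (card_le_card (insert_subset (by simp) subset_union_left)))

variable {n : ℕ}

lemma degSum_add_le_of_card_eq (hn : 4 ≤ n) (hfree : ¬ ContainsCopy G (TnStar n))
    (hs : G.ConnectedOn s) (hts : t ⊆ s) (hlt : #t < #s) (ht : #t = n - 1) :
    G.degSum t + (n - 2) ≤ (n - 2) * #t := by
  by_contra! hdense
  obtain ⟨x, hx, y, hy, hxy⟩ :=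
    hs t hts (card_pos.1 (by omega)) fun h => hlt.ne (congrArg card h)
  refine hfree (containsCopy_tnStar_of_two_universal hn ht ?_ hx (mem_sdiff.1 hy).2 hxy)
  have := degSum_le_add_card_filter_degIn_eq (G := G) t
  generalize #{v ∈ t | G.degIn t v = #t - 1} = k at this ⊢
  rw [ht] at this hdense
  have : (n - 2) * (n - 1) = (n - 1 - 2) * (n - 1) + (n - 1) := by
    rw [← Nat.succ_mul]; congr 1; omega
  omega

theorem degSum_add_le_of_connectedOn (hn : 6 ≤ n) (hfree : ¬ ContainsCopy G (TnStar n))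
    (hs : G.ConnectedOn s) (hcard : n ≤ #s) : G.degSum s + (n - 2) ≤ (n - 2) * #s := by
  induction s using Finset.strongInduction with
  | H s ih =>
    by_contra! hdense
    by_cases hlow : ∃ v ∈ s, 2 * G.degIn s v ≤ n - 2
    · obtain ⟨v, hv, hdv⟩ := hlow
      have hsparse : G.degSum (s.erase v) + (n - 2) ≤ (n - 2) * #(s.erase v) := by
        refine degSum_add_le_of_forall_connectedOn _ (fun t ht htne htc => ?_)
          (card_pos.1 (by rw [card_erase_of_mem hv]; omega))
        have hts : t ⊆ s := ht.trans (erase_subset v s)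
        have htlt : #t < #s := (card_le_card ht).trans_lt (card_erase_lt_of_mem hv)
        rcases lt_trichotomy #t (n - 1) with hlt | heq | hgt
        · exact degSum_add_le_of_card_le htne (by omega)
        · exact degSum_add_le_of_card_eq (by omega) hfree hs hts htlt heq
        · exact ih t (ht.trans_ssubset (erase_ssubset hv)) htc (by omega)
      rw [card_erase_of_mem hv, Nat.mul_sub_one] at hsparse
      rw [degSum_erase hv] at hdense
      have : n - 2 ≤ (n - 2) * #s := Nat.le_mul_of_pos_right _ (by omega)
      omega
    · simp only [not_exists, not_and, not_le] at hlow
      obtain ⟨v, hv, hdv⟩ : ∃ v ∈ s, n - 3 < G.degIn s v := by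
        refine exists_lt_degIn_of_mul_card_lt ?_
        have : (n - 2) * #s = (n - 3) * #s + #s := by
          rw [← Nat.succ_mul]; congr 1; omega
        omega
      exact hfree (containsCopy_tnStar_of_le_degIn (by omega) hs hcard
        (fun w hw => by have := hlow w hw; omega) hv (by omega))

theorem degSum_add_le_or_dvd (hn : 6 ≤ n) (hfree : ¬ ContainsCopy G (TnStar n)) (s : Finset V) :
    G.degSum s + (n - 2) ≤ (n - 2) * #s ∨ (G.degSum s ≤ (n - 2) * #s ∧ n - 1 ∣ #s) := by
  refine induction_on_connectedOn (G := G)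
    (P := fun s => G.degSum s + (n - 2) ≤ (n - 2) * #s ∨ (G.degSum s ≤ (n - 2) * #s ∧ n - 1 ∣ #s))
    (.inr ⟨by simp [degSum], dvd_zero _⟩) ?_ s fun t _ htne htc => ?_
  · intro t u hd hsep ht hu
    rw [degSum_union_of_forall_not_adj hd hsep, card_union_of_disjoint hd, mul_add]
    rcases ht with ht | ⟨ht, htd⟩ <;> rcases hu with hu | ⟨hu, hud⟩
    · omega
    · omega
    · omega
    · exact .inr ⟨by omega, dvd_add htd hud⟩
  · rcases lt_trichotomy #t (n - 1) with hlt | heq | hgt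
    · exact .inl (degSum_add_le_of_card_le htne (by omega))
    · refine .inr ⟨(degSum_le t).trans ?_, heq ▸ dvd_rfl⟩
      rw [heq, mul_comm]
      exact Nat.mul_le_mul_left _ (by omega)
    · exact .inl (degSum_add_le_of_connectedOn hn hfree htc (by omega))

section FiberGraph

variable {V β : Type*}

def fiberGraph (f : V → β) : SimpleGraph V where
  Adj a b := a ≠ b ∧ f a = f b
  symm := ⟨fun _ _ h => ⟨h.1.symm, h.2.symm⟩⟩
  loopless := ⟨fun _ h => h.1 rfl⟩

@[simp]
lemma fiberGraph_adj {f : V → β} {a b : V} : (fiberGraph f).Adj a b ↔ a ≠ b ∧ f a = f b := Iff.rfl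

instance [DecidableEq V] [DecidableEq β] (f : V → β) : DecidableRel (fiberGraph f).Adj :=
  fun a b => inferInstanceAs (Decidable (a ≠ b ∧ f a = f b))

lemma not_containsCopy_tnStar_fiberGraph [Fintype V] [DecidableEq β] {f : V → β} {n : ℕ}
    (hn : 4 ≤ n) (hf : ∀ b, #{v | f v = b} < n) : ¬ ContainsCopy (fiberGraph f) (TnStar n) := by
  rintro ⟨e, he⟩
  have hstep : ∀ a b : Fin n, a.val ≠ b.val → ((a.val = 0 ∧ 1 ≤ b.val ∧ b.val ≤ n - 3) ∨
      (a.val = n - 3 ∧ b.val = n - 2) ∨ (a.val = n - 2 ∧ b.val = n - 1)) → f (e a) = f (e b) :=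
    fun a b hne hab => (fiberGraph_adj.1 (he a b (by
      rw [TnStar, fromRel_adj]; exact ⟨Fin.ne_of_val_ne hne, .inl hab⟩))).2
  -- every vertex of `T_n^*` is joined to `v_0` by a path of length at most three
  let r : Fin n := ⟨0, by omega⟩
  have h3 : f (e ⟨n - 3, by omega⟩) = f (e r) :=
    (hstep r _ (by simp [r]; omega) (.inl ⟨rfl, by simp; omega, le_rfl⟩)).symm
  have h2 : f (e ⟨n - 2, by omega⟩) = f (e r) :=
    (hstep _ _ (by simp; omega) (.inr (.inl ⟨rfl, rfl⟩))).symm.trans h3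
  have h1 : f (e ⟨n - 1, by omega⟩) = f (e r) :=
    (hstep _ _ (by simp; omega) (.inr (.inr ⟨rfl, rfl⟩))).symm.trans h2
  have hfiber : ∀ i, f (e i) = f (e r) := by
    intro i
    rcases (by omega : i.val = 0 ∨ (1 ≤ i.val ∧ i.val ≤ n - 3) ∨ i.val = n - 2 ∨ i.val = n - 1)
      with h | h | h | h
    · rw [show i = r from Fin.ext h]
    · exact (hstep r i (by simp [r]; omega) (.inl ⟨rfl, h⟩)).symm
    · rwa [show i = ⟨n - 2, by omega⟩ from Fin.ext h]
    · rwa [show i = ⟨n - 1, by omega⟩ from Fin.ext h]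
  have := card_le_card (s := univ.map e) (t := {v | f v = f (e r)}) fun v hv => by
    obtain ⟨i, -, rfl⟩ := mem_map.1 hv
    simp [hfiber]
  have := hf (f (e r))
  simp only [card_map, card_univ, Fintype.card_fin] at *
  omega

end FiberGraph

lemma card_filter_div_eq_le {m k : ℕ} (hk : 0 < k) (b : ℕ) : #{v : Fin m | v.val / k = b} ≤ k := by
  refine (card_le_card_of_injOn (fun v => v.val % k) (t := range k)
    (fun v _ => mem_range.2 (Nat.mod_lt _ hk)) fun v hv w hw hvw => Fin.ext ?_).trans_eq
    (card_range k)
  simp only [coe_filter, Set.mem_ofPred_eq, mem_univ, true_and] at hv hw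
  rw [← Nat.div_add_mod v.val k, ← Nat.div_add_mod w.val k, hv, hw]
  exact congrArg _ hvw

lemma card_filter_div_eq {m k b : ℕ} (hk : 0 < k) (hb : (b + 1) * k ≤ m) :
    #{v : Fin m | v.val / k = b} = k := by
  have hval : ({v : Fin m | v.val / k = b} : Finset (Fin m)).map Fin.valEmbedding =
      Ico (b * k) (b * k + k) := by
    ext x
    simp only [mem_map, mem_filter, mem_univ, true_and, Fin.valEmbedding_apply,
      Nat.div_eq_iff hk, mem_Ico]
    constructor
    · rintro ⟨a, ⟨h1, h2⟩, rfl⟩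
      omega
    · rintro ⟨h1, h2⟩
      exact ⟨⟨x, by rw [add_one_mul] at hb; omega⟩, ⟨h1, by dsimp only; omega⟩, rfl⟩
  rw [← card_map Fin.valEmbedding, hval, Nat.card_Ico]
  omega

lemma degree_fiberGraph_div {m k : ℕ} (v : Fin m) :
    (fiberGraph fun v : Fin m => v.val / k).degree v =
      #{w : Fin m | w.val / k = v.val / k} - 1 := by
  rw [← card_neighborFinset_eq_degree, neighborFinset_eq_filter,
    ← card_erase_of_mem (s := {w : Fin m | w.val / k = v.val / k}) (a := v) (by simp)]
  congr 1
  ext w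
  simp [eq_comm]

lemma sum_degree_fiberGraph_div {q k : ℕ} (hk : 0 < k) :
    ∑ v, (fiberGraph fun v : Fin (q * k + 1) => v.val / k).degree v = q * k * (k - 1) := by
  have hlast : #{w : Fin (q * k + 1) | w.val / k = (Fin.last (q * k)).val / k} = 1 := by
    refine card_eq_one.2 ⟨Fin.last _, eq_singleton_iff_unique_mem.2 ⟨by simp, fun w hw => ?_⟩⟩
    rw [mem_filter, Fin.val_last, Nat.mul_div_cancel _ hk] at hw
    have := Nat.div_mul_le_self w.val k
    exact Fin.ext (by rw [hw.2] at this; have := w.isLt; simp only [Fin.val_last]; omega)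
  have hcast : ∀ i : Fin (q * k), #{w : Fin (q * k + 1) | w.val / k = i.castSucc.val / k} = k :=
    fun i => card_filter_div_eq hk (by
      have : i.val / k < q := (Nat.div_lt_iff_lt_mul hk).2 i.isLt
      rw [Fin.val_castSucc]
      nlinarith)
  simp only [Fin.sum_univ_castSucc, degree_fiberGraph_div, hcast, hlast, sum_const, card_univ,
    Fintype.card_fin, smul_eq_mul, Nat.sub_self, add_zero]

end SimpleGraph

theorem stmt10_general (p n : ℕ) (hn : 6 ≤ n) (hmod : p % (n - 1) = 1) :
    exNum p (TnStar n) = (n - 2) * (p - 1) / 2 := by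
  classical
  obtain ⟨q, rfl⟩ : ∃ q, p = q * (n - 1) + 1 :=
    ⟨p / (n - 1), by have := Nat.div_add_mod' p (n - 1); omega⟩
  have hk : 0 < n - 1 := by omega
  rw [Nat.add_sub_cancel]
  refine IsGreatest.csSup_eq ⟨⟨fiberGraph fun v : Fin (q * (n - 1) + 1) => v.val / (n - 1),
    not_containsCopy_tnStar_fiberGraph (by omega)
      fun b => (card_filter_div_eq_le hk b).trans_lt (by omega), ?_⟩, ?_⟩
  · have := sum_degree_fiberGraph_div (q := q) hk
    rw [sum_degrees_eq_twice_card_edges, edgeFinset_card, ← Nat.card_eq_fintype_card,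
      show n - 1 - 1 = n - 2 by omega, mul_comm (q * (n - 1))] at this
    omega
  · rintro _ ⟨G, hG, rfl⟩
    have hedges := degSum_univ (G := G)
    rcases degSum_add_le_or_dvd hn hG univ with h | ⟨-, hdvd⟩
    · rw [card_univ, Fintype.card_fin, mul_add_one] at h
      omega
    · rw [card_univ, Fintype.card_fin] at hdvd
      have := Nat.dvd_one.1 ((Nat.dvd_add_right (dvd_mul_left _ _)).1 hdvd)
      omega

theorem stmt10 (p n : ℕ) (hn : 6 ≤ n) (hp : n ≤ p) (hmod : p % (n - 1) = 1) :
    exNum p (TnStar n) = (n - 2) * (p - 1) / 2 :=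
  stmt10_general p n hn hmod
end
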